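/- arXiv:1211.3693 — 2 statements merged into one kernel-verified Lean document; each statement's English description precedes it below -/
import Mathlib

section
/- Let S be a numerical semigroup with maximal ideal M = S∖{0} and standard canonical ideal K = K(S), and let E be an ideal of S with normalization Ẽ = E + (f(S) − f(E)). Assume K − (M−M) ⊆ Ẽ. Then the map y ↦ f(S) − y is a bijection from (K − Ẽ) ∖ S onto (Ẽ − M) ∖ (Ẽ ∪ {f(S)}). In particular, |(K − Ẽ) ∖ S| = |(Ẽ − M) ∖ Ẽ| − 1. -/
open Set

/-- A numerical semigroup: an additive submonoid of ℕ (viewed inside ℤ)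
with finite complement in ℕ. -/
def IsNumericalSemigroup (S : Set ℤ) : Prop :=
  0 ∈ S ∧ (∀ x ∈ S, ∀ y ∈ S, x + y ∈ S) ∧ (∀ x ∈ S, 0 ≤ x) ∧
    ({z : ℤ | 0 ≤ z} \ S).Finite

/-- The Frobenius number of a set `X ⊆ ℤ`: the largest integer not in `X`. -/
noncomputable def frobNum (X : Set ℤ) : ℤ := sSup {z : ℤ | z ∉ X}

/-- The genus of a numerical semigroup: the number of gaps. -/
noncomputable def genus (S : Set ℤ) : ℕ := ({z : ℤ | 0 ≤ z} \ S).ncard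

/-- `E` is an ideal of `S`: a nonempty subset of `S` closed under adding elements of `S`. -/
def IsIdealOf (S E : Set ℤ) : Prop :=
  E.Nonempty ∧ E ⊆ S ∧ ∀ e ∈ E, ∀ s ∈ S, e + s ∈ E

/-- `E` is a relative ideal of `S`. -/
def IsRelIdealOf (S E : Set ℤ) : Prop :=
  E.Nonempty ∧ (∀ e ∈ E, ∀ s ∈ S, e + s ∈ E) ∧ ∃ s ∈ S, ∀ e ∈ E, s + e ∈ S

/-- The difference of two subsets of ℤ: `F − G = {z : z + G ⊆ F}`. -/
def setSub (F G : Set ℤ) : Set ℤ := {z : ℤ | ∀ g ∈ G, z + g ∈ F}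

/-- The standard canonical ideal `K(S) = {x : f(S) − x ∉ S}`. -/
def stdCanonical (S : Set ℤ) : Set ℤ := {x : ℤ | frobNum S - x ∉ S}

/-- The maximal ideal `M(S) = S ∖ {0}`. -/
def maxIdeal (S : Set ℤ) : Set ℤ := S \ {0}

/-- The type of a numerical semigroup: `t(S) = |(M−M) ∖ S|`. -/
noncomputable def typeNS (S : Set ℤ) : ℕ :=
  ((setSub (maxIdeal S) (maxIdeal S)) \ S).ncard

/-- The numerical duplication `S ⋈^b E = 2·S ∪ (2·E + b)`. -/
def dup (S E : Set ℤ) (b : ℤ) : Set ℤ :=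
  (fun x => 2 * x) '' S ∪ (fun x => 2 * x + b) '' E

/-- The minimum of a (relative) ideal. -/
noncomputable def minE (E : Set ℤ) : ℤ := sInf E

/-- The genus of a relative ideal:
`g(E) = |{x ∈ ℤ∖E : m(E) ≤ x ≤ f(E)}|`. -/
noncomputable def idealGenus (E : Set ℤ) : ℕ :=
  {x : ℤ | x ∉ E ∧ minE E ≤ x ∧ x ≤ frobNum E}.ncard

/-- The normalization `Ẽ = E + (f(S) − f(E))` of a (relative) ideal `E` of `S`. -/
def tilde (S E : Set ℤ) : Set ℤ := (fun e => e + (frobNum S - frobNum E)) '' E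

/-- `S` is symmetric: `z ∈ S ↔ f(S) − z ∉ S`. -/
def IsSymmetric (S : Set ℤ) : Prop := ∀ z : ℤ, z ∈ S ↔ frobNum S - z ∉ S

/-- `S` is almost symmetric: `K(S) + M(S) ⊆ M(S)`. -/
def IsAlmostSymmetric (S : Set ℤ) : Prop :=
  ∀ k ∈ stdCanonical S, ∀ m ∈ maxIdeal S, k + m ∈ maxIdeal S

private lemma frob_spec {X : Set ℤ} (hne : {z : ℤ | z ∉ X}.Nonempty)
    (hbd : BddAbove {z : ℤ | z ∉ X}) :
    frobNum X ∉ X ∧ ∀ z, frobNum X < z → z ∈ X := by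
  have h1 : frobNum X ∈ {z : ℤ | z ∉ X} := Int.csSup_mem hne hbd
  refine ⟨h1, fun z hz => ?_⟩
  by_contra hzX
  exact absurd (le_csSup hbd hzX) (not_le.mpr hz)

/-- If `K - (M-M) ⊆ Ẽ`, then `y ↦ f(S) - y` is a bijection from
`(K - Ẽ) \ S` onto `(Ẽ - M) \ (Ẽ ∪ {f(S)})`; in particular
`|(K - Ẽ) \ S| = |(Ẽ - M) \ Ẽ| - 1`. -/
theorem bijection_dual_minus_S
    (S E : Set ℤ)
    (hS : IsNumericalSemigroup S) (hE : IsIdealOf S E)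
    (h : setSub (stdCanonical S) (setSub (maxIdeal S) (maxIdeal S)) ⊆ tilde S E) :
    Set.BijOn (fun y => frobNum S - y)
        ((setSub (stdCanonical S) (tilde S E)) \ S)
        ((setSub (tilde S E) (maxIdeal S)) \ (tilde S E ∪ {frobNum S})) ∧
      ((setSub (stdCanonical S) (tilde S E)) \ S).ncard + 1 =
        ((setSub (tilde S E) (maxIdeal S)) \ tilde S E).ncard := by
  
  obtain ⟨hS0, hSadd, hSpos, hSfin⟩ := hS
  obtain ⟨⟨e₀, he₀⟩, hES, hEadd⟩ := hE
  -- basic facts about frobNum S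
  have hSne : {z : ℤ | z ∉ S}.Nonempty := ⟨-1, fun hc => by have := hSpos _ hc; omega⟩
  have hSbd : BddAbove {z : ℤ | z ∉ S} := by
    obtain ⟨b, hb⟩ := hSfin.bddAbove
    refine ⟨max b 0, fun z hz => ?_⟩
    by_cases h0 : 0 ≤ z
    · exact le_trans (hb ⟨h0, hz⟩) (le_max_left _ _)
    · exact le_trans (le_of_lt (not_le.mp h0)) (le_max_right _ _)
  obtain ⟨hfS, hfS'⟩ := frob_spec hSne hSbd
  -- basic facts about frobNum E
  have hEne : {z : ℤ | z ∉ E}.Nonempty :=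
    ⟨-1, fun hc => by have := hSpos _ (hES hc); omega⟩
  have hEbd : BddAbove {z : ℤ | z ∉ E} := by
    refine ⟨e₀ + frobNum S, fun z hz => ?_⟩
    by_contra hle
    push_neg at hle
    have h1 : z - e₀ ∈ S := hfS' _ (by omega)
    have h2 : e₀ + (z - e₀) ∈ E := hEadd e₀ he₀ _ h1
    rw [show e₀ + (z - e₀) = z by ring] at h2
    exact hz h2
  obtain ⟨hfE, hfE'⟩ := frob_spec hEne hEbd
  -- membership in tilde S E
  have htmem : ∀ z : ℤ, z ∈ tilde S E ↔ z - (frobNum S - frobNum E) ∈ E := by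
    intro z
    constructor
    · rintro ⟨e, heE, rfl⟩
      rwa [show e + (frobNum S - frobNum E) - (frobNum S - frobNum E) = e by ring]
    · intro hz; exact ⟨_, hz, by ring⟩
  have hEt_gt : ∀ z : ℤ, frobNum S < z → z ∈ tilde S E := by
    intro z hz
    exact (htmem z).mpr (hfE' _ (by omega))
  have hEt_not : frobNum S ∉ tilde S E := by
    intro hc
    have := (htmem _).mp hc
    rw [show frobNum S - (frobNum S - frobNum E) = frobNum E by ring] at this
    exact hfE this
  have hEt_add : ∀ x ∈ tilde S E, ∀ s ∈ S, x + s ∈ tilde S E := by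
    intro x hx s hs
    rw [htmem] at hx ⊢
    have := hEadd _ hx s hs
    rwa [show x + s - (frobNum S - frobNum E)
        = x - (frobNum S - frobNum E) + s by ring]
  have hM1 : ∀ m ∈ maxIdeal S, 1 ≤ m := by
    rintro m ⟨hmS, hm0⟩
    have := hSpos _ hmS
    simp only [mem_singleton_iff] at hm0
    omega
  have hfSm1 : (-1 : ℤ) ≤ frobNum S := le_csSup hSbd (by
    simp only [mem_setOf_eq]
    intro hc; have := hSpos _ hc; omega)
  have hm₀ : frobNum S + 2 ∈ maxIdeal S := by
    refine ⟨hfS' _ (by omega), ?_⟩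
    simp only [mem_singleton_iff]
    omega
  -- maps to
  have hmaps : Set.MapsTo (fun y => frobNum S - y)
      ((setSub (stdCanonical S) (tilde S E)) \ S)
      ((setSub (tilde S E) (maxIdeal S)) \ (tilde S E ∪ {frobNum S})) := by
    rintro y ⟨hyK, hyS⟩
    have hyK' : ∀ g ∈ tilde S E, y + g ∈ stdCanonical S := hyK
    refine ⟨?_, ?_⟩
    · show ∀ m ∈ maxIdeal S, frobNum S - y + m ∈ tilde S E
      intro m hm
      apply h
      show ∀ u ∈ setSub (maxIdeal S) (maxIdeal S),
        frobNum S - y + m + u ∈ stdCanonical S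
      intro u hu
      have hu' : ∀ g ∈ maxIdeal S, u + g ∈ maxIdeal S := hu
      show frobNum S - (frobNum S - y + m + u) ∉ S
      intro hcon
      rw [show frobNum S - (frobNum S - y + m + u) = y - m - u by ring] at hcon
      have hum : u + m ∈ maxIdeal S := hu' m hm
      have h3 : (y - m - u) + (u + m) ∈ S := hSadd _ hcon _ hum.1
      rw [show y - m - u + (u + m) = y by ring] at h3
      exact hyS h3
    · rintro (hEt | hf)
      · have h4 : y + (frobNum S - y) ∈ stdCanonical S := hyK' _ hEt
        have h5 : frobNum S - (y + (frobNum S - y)) ∉ S := h4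
        rw [show frobNum S - (y + (frobNum S - y)) = 0 by ring] at h5
        exact h5 hS0
      · simp only [mem_singleton_iff] at hf
        have : y = 0 := by omega
        exact hyS (this ▸ hS0)
  have hinj : Set.InjOn (fun y => frobNum S - y)
      ((setSub (stdCanonical S) (tilde S E)) \ S) := by
    intro a _ b _ hab
    simp only at hab
    omega
  have hsurj : Set.SurjOn (fun y => frobNum S - y)
      ((setSub (stdCanonical S) (tilde S E)) \ S)
      ((setSub (tilde S E) (maxIdeal S)) \ (tilde S E ∪ {frobNum S})) := by
    rintro x ⟨hxM, hxE⟩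
    have hxM' : ∀ m ∈ maxIdeal S, x + m ∈ tilde S E := hxM
    have hxE1 : x ∉ tilde S E := fun hc => hxE (Or.inl hc)
    have hxE2 : x ≠ frobNum S := fun hc => hxE (Or.inr hc)
    refine ⟨frobNum S - x, ⟨?_, ?_⟩, by show frobNum S - (frobNum S - x) = x; ring⟩
    · show ∀ e ∈ tilde S E, frobNum S - x + e ∈ stdCanonical S
      intro e he
      show frobNum S - (frobNum S - x + e) ∉ S
      intro hcon
      rw [show frobNum S - (frobNum S - x + e) = x - e by ring] at hcon
      have h6 := hEt_add e he _ hcon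
      rw [show e + (x - e) = x by ring] at h6
      exact hxE1 h6
    · intro hcon
      by_cases h0 : frobNum S - x = 0
      · exact hxE2 (by omega)
      · have hM : frobNum S - x ∈ maxIdeal S := ⟨hcon, h0⟩
        have h7 := hxM' _ hM
        rw [show x + (frobNum S - x) = frobNum S by ring] at h7
        exact hEt_not h7
  have hbij : Set.BijOn (fun y => frobNum S - y)
      ((setSub (stdCanonical S) (tilde S E)) \ S)
      ((setSub (tilde S E) (maxIdeal S)) \ (tilde S E ∪ {frobNum S})) :=
    ⟨hmaps, hinj, hsurj⟩
  refine ⟨hbij, ?_⟩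
  -- frobNum S belongs to (Ẽ - M) \ Ẽ
  have hfmem : frobNum S ∈ setSub (tilde S E) (maxIdeal S) \ tilde S E := by
    refine ⟨?_, hEt_not⟩
    show ∀ m ∈ maxIdeal S, frobNum S + m ∈ tilde S E
    intro m hm
    exact hEt_gt _ (by have := hM1 m hm; omega)
  have hsetEq : setSub (tilde S E) (maxIdeal S) \ tilde S E
      = insert (frobNum S)
        ((setSub (tilde S E) (maxIdeal S)) \ (tilde S E ∪ {frobNum S})) := by
    ext z
    simp only [mem_diff, mem_insert_iff, mem_union, mem_singleton_iff]
    constructor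
    · rintro ⟨h1, h2⟩
      by_cases hz : z = frobNum S
      · exact Or.inl hz
      · exact Or.inr ⟨h1, fun hc => hc.elim h2 hz⟩
    · rintro (rfl | ⟨h1, h2⟩)
      · exact ⟨hfmem.1, hfmem.2⟩
      · exact ⟨h1, fun hc => h2 (Or.inl hc)⟩
  have hfin : (setSub (tilde S E) (maxIdeal S) \ tilde S E).Finite := by
    apply (Set.finite_Icc (frobNum S - frobNum E - (frobNum S + 2)) (frobNum S)).subset
    rintro z ⟨h1, h2⟩
    have h1' : ∀ m ∈ maxIdeal S, z + m ∈ tilde S E := h1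
    have hz1 : z ≤ frobNum S := by
      by_contra hc; exact h2 (hEt_gt _ (by omega))
    have hz2 : z + (frobNum S + 2) ∈ tilde S E := h1' _ hm₀
    have hz3 := (htmem _).mp hz2
    have hpos := hSpos _ (hES hz3)
    simp only [mem_Icc]
    omega
  have hBfin : ((setSub (tilde S E) (maxIdeal S)) \ (tilde S E ∪ {frobNum S})).Finite :=
    hfin.subset (Set.diff_subset_diff_right Set.subset_union_left)
  have himg := hbij.image_eq
  have h1 : ((setSub (stdCanonical S) (tilde S E)) \ S).ncard
      = ((setSub (tilde S E) (maxIdeal S)) \ (tilde S E ∪ {frobNum S})).ncard := by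
    rw [← himg, Set.ncard_image_of_injOn hinj]
  have hfnot : frobNum S ∉
      (setSub (tilde S E) (maxIdeal S)) \ (tilde S E ∪ {frobNum S}) :=
    fun hc => hc.2 (Or.inr rfl)
  rw [hsetEq, Set.ncard_insert_of_notMem hfnot hBfin, h1]
end

section
/- Let S be a numerical semigroup and let x be an odd integer with 1 ≤ x ≤ 2t(S) + 1, where t(S) is the type of S. Then for every odd b ∈ S there exist infinitely many ideals E ⊆ S such that the numerical duplication S⋈ᵇE is almost symmetric and t(S⋈ᵇE) = x. -/
/-!
Let `f` be the Frobenius number of `S` and write `x = 2k + 1`. Adjoining to `S` its `k` largest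
pseudo-Frobenius numbers `Z` gives a semigroup `T = S ∪ Z` with `T + M(S) ⊆ M(S)`. For every
`F > 2f` (and `F ≥ 0`) the set `E = {z : F − z ∉ T}` is an ideal of `S` with `f(E) = F`, so
`D = S ⋈ᵇ E` has Frobenius number `2F + b`, and `2w ∈ K(D) ↔ w ∈ T`, `2w + b ∈ K(D) ↔ F − w ∉ S`.
From `T + M(S) ⊆ M(S)` one gets `K(D) + M(D) ⊆ M(D)`. For an almost symmetric `D` the
pseudo-Frobenius numbers are `(K(D) ∖ D) ∪ {f(D)}`, and here `K(D) ∖ D = 2·Z ∪ (2·(F − Z) + b)`,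
so `t(D) = 2k + 1`. Distinct `F` give distinct ideals, since `F = f(E)`.
-/

open Set

def pseudoFrob (S : Set ℤ) : Set ℤ := setSub (maxIdeal S) (maxIdeal S) \ S

lemma typeNS_eq_ncard_pseudoFrob (S : Set ℤ) : typeNS S = (pseudoFrob S).ncard := rfl

/-- `F − (ℤ ∖ T)`; for `F = f(T)` this is `K(T)`. -/
def reflCompl (T : Set ℤ) (F : ℤ) : Set ℤ := {z | F - z ∉ T}

/-- Since `M(S) − M(S) = S ∪ PF(S)`, this is `S` enlarged by pseudo-Frobenius numbers of `S` to
a semigroup. -/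
structure IsPFExtension (S T : Set ℤ) : Prop where
  subset : S ⊆ T
  add_mem : ∀ x ∈ T, ∀ y ∈ T, x + y ∈ T
  subset_setSub : T ⊆ setSub (maxIdeal S) (maxIdeal S)

section Frobenius

variable {X : Set ℤ} {a z : ℤ}

/- Frobenius numbers are handled as `IsGreatest Xᶜ a`: `frobNum X` is a junk `sSup` unless `Xᶜ`
is nonempty and bounded above. -/
lemma frobNum_eq_of_isGreatest (h : IsGreatest Xᶜ a) : frobNum X = a := h.csSup_eq

lemma mem_of_isGreatest_compl_of_lt (h : IsGreatest Xᶜ a) (hz : a < z) : z ∈ X := by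
  by_contra hzX
  exact (h.2 hzX).not_gt hz

end Frobenius

namespace IsNumericalSemigroup

variable {S : Set ℤ} {f : ℤ}

lemma zero_mem (hS : IsNumericalSemigroup S) : 0 ∈ S := hS.1

lemma add_mem (hS : IsNumericalSemigroup S) {x y : ℤ} (hx : x ∈ S) (hy : y ∈ S) : x + y ∈ S :=
  hS.2.1 x hx y hy

lemma nonneg (hS : IsNumericalSemigroup S) {x : ℤ} (hx : x ∈ S) : 0 ≤ x := hS.2.2.1 x hx

lemma exists_isGreatest_compl (hS : IsNumericalSemigroup S) : ∃ f, IsGreatest Sᶜ f := by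
  have hne : (Sᶜ).Nonempty := ⟨-1, fun h => by linarith [hS.nonneg h]⟩
  have hbdd : BddAbove Sᶜ := by
    refine ((bddAbove_Iio (a := (0 : ℤ))).union hS.2.2.2.bddAbove).mono fun z hz => ?_
    rcases lt_or_ge z 0 with h | h
    exacts [Or.inl h, Or.inr ⟨h, hz⟩]
  exact ⟨sSup Sᶜ, Int.csSup_mem hne hbdd, fun _ hz => le_csSup hbdd hz⟩

lemma neg_one_le (hS : IsNumericalSemigroup S) (hf : IsGreatest Sᶜ f) : -1 ≤ f :=
  hf.2 fun h => by linarith [hS.nonneg h]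

lemma pos_of_mem_maxIdeal (hS : IsNumericalSemigroup S) {m : ℤ} (hm : m ∈ maxIdeal S) : 0 < m :=
  lt_of_le_of_ne (hS.nonneg hm.1) (Ne.symm hm.2)

lemma subset_setSub_maxIdeal (hS : IsNumericalSemigroup S) :
    S ⊆ setSub (maxIdeal S) (maxIdeal S) := fun s hs m hm =>
  ⟨hS.add_mem hs hm.1, fun h => by
    have := hS.nonneg hs
    have := hS.pos_of_mem_maxIdeal hm
    rw [mem_singleton_iff] at h
    omega⟩

lemma nonneg_of_mem_setSub_maxIdeal (hS : IsNumericalSemigroup S) {p : ℤ}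
    (hp : p ∈ setSub (maxIdeal S) (maxIdeal S)) : 0 ≤ p := by
  obtain ⟨f, hf⟩ := hS.exists_isGreatest_compl
  by_contra! hp0
  -- `max f 0 − p` lies beyond `f`, and adding `p` lands on `max f 0`, which is `f` or `0`.
  have hm : max f 0 - p ∈ maxIdeal S :=
    ⟨mem_of_isGreatest_compl_of_lt hf (by omega), by simp only [mem_singleton_iff]; omega⟩
  obtain ⟨hS', h0⟩ := hp _ hm
  rw [add_sub_cancel] at hS' h0
  rcases le_total f 0 with h | h
  · exact h0 (max_eq_right h)
  · exact hf.1 (by rwa [max_eq_left h] at hS')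

lemma pos_of_mem_pseudoFrob (hS : IsNumericalSemigroup S) {p : ℤ} (hp : p ∈ pseudoFrob S) :
    0 < p :=
  lt_of_le_of_ne (hS.nonneg_of_mem_setSub_maxIdeal hp.1) fun h => hp.2 (h ▸ hS.zero_mem)

lemma finite_pseudoFrob (hS : IsNumericalSemigroup S) : (pseudoFrob S).Finite :=
  hS.2.2.2.subset fun _ hp => ⟨hS.nonneg_of_mem_setSub_maxIdeal hp.1, hp.2⟩

end IsNumericalSemigroup

lemma add_mem_setSub_self {M : Set ℤ} {p q : ℤ} (hp : p ∈ setSub M M) (hq : q ∈ setSub M M) :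
    p + q ∈ setSub M M := fun m hm => by
  rw [add_assoc]
  exact hp _ (hq m hm)

lemma Set.Finite.exists_subset_ncard_eq_upClosed {α : Type*} [LinearOrder α] {s : Set α}
    (hs : s.Finite) {k : ℕ} (hk : k ≤ s.ncard) :
    ∃ t ⊆ s, t.ncard = k ∧ ∀ x ∈ t, ∀ y ∈ s, x < y → y ∈ t := by
  induction k with
  | zero => exact ⟨∅, empty_subset _, ncard_empty _, by simp⟩
  | succ n ih =>
    obtain ⟨t, hts, htn, hup⟩ := ih (by omega)
    have hne : (s \ t).Nonempty := by
      rw [nonempty_iff_ne_empty, Ne, sdiff_eq_empty]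
      intro hst
      rw [hst.antisymm hts, htn] at hk
      omega
    obtain ⟨m, ⟨hms, hmt⟩, hmax⟩ := exists_max_image (s \ t) id (hs.subset sdiff_subset) hne
    refine ⟨insert m t, insert_subset hms hts, ?_, ?_⟩
    · rw [ncard_insert_of_notMem hmt (hs.subset hts), htn]
    · rintro x (rfl | hxt) y hys hxy
      · by_contra hy
        exact (hmax y ⟨hys, fun h => hy (Or.inr h)⟩).not_gt hxy
      · exact Or.inr (hup x hxt y hys hxy)

section PFExtension

variable {S T Z : Set ℤ} {f F t z : ℤ}

lemma isPFExtension_union (hS : IsNumericalSemigroup S) (hZ : Z ⊆ pseudoFrob S)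
    (hup : ∀ z ∈ Z, ∀ p ∈ pseudoFrob S, z < p → p ∈ Z) : IsPFExtension S (S ∪ Z) := by
  have hSZ : ∀ s ∈ S, ∀ z ∈ Z, s + z ∈ S ∪ Z := fun s hs z hz => by
    rcases eq_or_ne s 0 with rfl | hs0
    · exact Or.inr (by rwa [zero_add])
    · exact Or.inl (by rw [add_comm]; exact ((hZ hz).1 s ⟨hs, hs0⟩).1)
  refine ⟨subset_union_left, ?_, union_subset hS.subset_setSub_maxIdeal fun z hz => (hZ hz).1⟩
  rintro x (hx | hx) y (hy | hy)
  · exact Or.inl (hS.add_mem hx hy)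
  · exact hSZ x hx y hy
  · exact add_comm y x ▸ hSZ y hy x hx
  · by_cases hxy : x + y ∈ S
    · exact Or.inl hxy
    · have hxy' : x + y ∈ pseudoFrob S := ⟨add_mem_setSub_self (hZ hx).1 (hZ hy).1, hxy⟩
      exact Or.inr (hup x hx _ hxy' (by linarith [hS.pos_of_mem_pseudoFrob (hZ hy)]))

lemma IsPFExtension.nonneg (hS : IsNumericalSemigroup S) (hT : IsPFExtension S T)
    (ht : t ∈ T) : 0 ≤ t :=
  hS.nonneg_of_mem_setSub_maxIdeal (hT.subset_setSub ht)

lemma IsPFExtension.diff_subset_pseudoFrob (hT : IsPFExtension S T) : T \ S ⊆ pseudoFrob S :=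
  fun _ ht => ⟨hT.subset_setSub ht.1, ht.2⟩

lemma mem_reflCompl : z ∈ reflCompl T F ↔ F - z ∉ T := Iff.rfl

lemma add_mem_reflCompl (hT : ∀ x ∈ T, ∀ y ∈ T, x + y ∈ T) (ht : t ∈ T)
    (hz : z ∈ reflCompl T F) : t + z ∈ reflCompl T F := fun h => by
  have := hT t ht _ h
  exact hz (by rwa [show t + (F - (t + z)) = F - z by ring] at this)

lemma isGreatest_compl_reflCompl (h0 : 0 ∈ T) (hT : ∀ t ∈ T, 0 ≤ t) :
    IsGreatest (reflCompl T F)ᶜ F :=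
  ⟨fun h => h (by rwa [sub_self]), fun z hz => by
    have := hT _ (not_not.1 hz); omega⟩

lemma IsPFExtension.isGreatest_compl_reflCompl (hS : IsNumericalSemigroup S)
    (hT : IsPFExtension S T) : IsGreatest (reflCompl T F)ᶜ F :=
  _root_.isGreatest_compl_reflCompl (hT.subset hS.zero_mem) fun _ => hT.nonneg hS

lemma le_of_mem_reflCompl (hf : IsGreatest Sᶜ f) (hST : S ⊆ T) (hz : z ∈ reflCompl T F) :
    F - f ≤ z := by
  have := hf.2 fun h => hz (hST h)
  omega

lemma IsPFExtension.isIdealOf_reflCompl (hS : IsNumericalSemigroup S) (hT : IsPFExtension S T)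
    (hf : IsGreatest Sᶜ f) (hfF : 2 * f < F) : IsIdealOf S (reflCompl T F) := by
  refine ⟨⟨F + 1, fun h => ?_⟩, fun z hz => ?_, fun e he s hs => ?_⟩
  · have := hT.nonneg hS h; omega
  · exact mem_of_isGreatest_compl_of_lt hf (by linarith [le_of_mem_reflCompl hf hT.subset hz])
  · rw [add_comm]
    exact add_mem_reflCompl hT.add_mem (hT.subset hs) he

end PFExtension

section Duplication

variable {S E : Set ℤ} {b f g w : ℤ}

lemma Odd.exists_eq_two_mul_or_eq_two_mul_add (hb : Odd b) (z : ℤ) :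
    ∃ w, z = 2 * w ∨ z = 2 * w + b := by
  obtain ⟨j, rfl⟩ := hb
  rcases Int.even_or_odd' z with ⟨w, rfl | rfl⟩
  exacts [⟨w, Or.inl rfl⟩, ⟨w - j, Or.inr (by ring)⟩]

lemma two_mul_mem_dup (hb : Odd b) : 2 * w ∈ dup S E b ↔ w ∈ S := by
  obtain ⟨j, rfl⟩ := hb
  constructor
  · rintro (⟨s, hs, h⟩ | ⟨e, -, h⟩) <;> simp only at h
    · rwa [show w = s by omega]
    · omega
  · exact fun h => Or.inl ⟨w, h, rfl⟩

lemma two_mul_add_mem_dup (hb : Odd b) : 2 * w + b ∈ dup S E b ↔ w ∈ E := by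
  obtain ⟨j, rfl⟩ := hb
  constructor
  · rintro (⟨s, -, h⟩ | ⟨e, he, h⟩) <;> simp only at h
    · omega
    · rwa [show w = e by omega]
  · exact fun h => Or.inr ⟨w, h, rfl⟩

lemma two_mul_mem_maxIdeal_dup (hb : Odd b) :
    2 * w ∈ maxIdeal (dup S E b) ↔ w ∈ maxIdeal S := by
  simp only [maxIdeal, mem_sdiff, two_mul_mem_dup hb, mem_singleton_iff, mul_eq_zero,
    two_ne_zero, false_or]

lemma two_mul_add_mem_maxIdeal_dup (hb : Odd b) :
    2 * w + b ∈ maxIdeal (dup S E b) ↔ w ∈ E := by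
  simp only [maxIdeal, mem_sdiff, two_mul_add_mem_dup hb, mem_singleton_iff, and_iff_left_iff_imp]
  obtain ⟨j, rfl⟩ := hb
  omega

lemma nonneg_of_mem_dup (hS : ∀ s ∈ S, 0 ≤ s) (hE : E ⊆ S) (hb : 0 ≤ b) {z : ℤ}
    (hz : z ∈ dup S E b) : 0 ≤ z := by
  rcases hz with ⟨s, hs, rfl⟩ | ⟨e, he, rfl⟩
  · linarith [hS s hs]
  · linarith [hS e (hE he)]

lemma isGreatest_compl_dup (hb : Odd b) (hf : IsGreatest Sᶜ f) (hg : IsGreatest Eᶜ g)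
    (hfg : 2 * f ≤ 2 * g + b) : IsGreatest (dup S E b)ᶜ (2 * g + b) := by
  refine ⟨fun h => hg.1 ((two_mul_add_mem_dup hb).1 h), fun z hz => ?_⟩
  by_contra! hlt
  obtain ⟨w, rfl | rfl⟩ := hb.exists_eq_two_mul_or_eq_two_mul_add z
  · exact hz ((two_mul_mem_dup hb).2 (mem_of_isGreatest_compl_of_lt hf (by omega)))
  · exact hz ((two_mul_add_mem_dup hb).2 (mem_of_isGreatest_compl_of_lt hg (by omega)))

lemma two_mul_mem_stdCanonical_dup (hb : Odd b) (hD : IsGreatest (dup S E b)ᶜ (2 * g + b)) :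
    2 * w ∈ stdCanonical (dup S E b) ↔ g - w ∉ E := by
  rw [stdCanonical, mem_ofPred_eq, frobNum_eq_of_isGreatest hD,
    show 2 * g + b - 2 * w = 2 * (g - w) + b by ring, two_mul_add_mem_dup hb]

lemma two_mul_add_mem_stdCanonical_dup (hb : Odd b)
    (hD : IsGreatest (dup S E b)ᶜ (2 * g + b)) :
    2 * w + b ∈ stdCanonical (dup S E b) ↔ g - w ∉ S := by
  rw [stdCanonical, mem_ofPred_eq, frobNum_eq_of_isGreatest hD,
    show 2 * g + b - (2 * w + b) = 2 * (g - w) by ring, two_mul_mem_dup hb]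

end Duplication

section AlmostSymmetric

variable {D : Set ℤ} {G : ℤ}

lemma pseudoFrob_eq_insert_of_isAlmostSymmetric (hpos : ∀ z ∈ D, 0 ≤ z)
    (hG : IsGreatest Dᶜ G) (hG0 : 0 ≤ G) (hD : IsAlmostSymmetric D) :
    pseudoFrob D = insert G (stdCanonical D \ D) := by
  have hM : ∀ m ∈ maxIdeal D, 0 < m := fun m hm =>
    lt_of_le_of_ne (hpos m hm.1) (Ne.symm hm.2)
  ext p
  simp only [pseudoFrob, mem_insert_iff, mem_sdiff]
  constructor
  · rintro ⟨hp, hpD⟩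
    refine or_iff_not_imp_left.2 fun hpG => ⟨fun hGp => ?_, hpD⟩
    rw [frobNum_eq_of_isGreatest hG] at hGp
    -- otherwise `G = p + (G − p)` would lie in `M(D)`
    have := (hp (G - p) ⟨hGp, by simp only [mem_singleton_iff]; omega⟩).1
    exact hG.1 (by rwa [add_sub_cancel] at this)
  · rintro (rfl | ⟨hpK, hpD⟩)
    · refine ⟨fun m hm => ⟨mem_of_isGreatest_compl_of_lt hG ?_, ?_⟩, hG.1⟩ <;>
        have := hM m hm
      · omega
      · simp only [mem_singleton_iff]; omega
    · exact ⟨hD p hpK, hpD⟩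

lemma typeNS_eq_ncard_add_one_of_isAlmostSymmetric (h0 : 0 ∈ D) (hpos : ∀ z ∈ D, 0 ≤ z)
    (hG : IsGreatest Dᶜ G) (hG0 : 0 ≤ G) (hD : IsAlmostSymmetric D) :
    typeNS D = (stdCanonical D \ D).ncard + 1 := by
  have hfin : (stdCanonical D \ D).Finite := (finite_Icc 0 G).subset fun z hz => by
    have h1 := hG.2 hz.2
    have h2 := hG.2 hz.1
    rw [frobNum_eq_of_isGreatest hG] at h2
    exact ⟨by omega, h1⟩
  have hGK : G ∉ stdCanonical D \ D := fun h =>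
    h.1 (by rwa [frobNum_eq_of_isGreatest hG, sub_self])
  rw [typeNS_eq_ncard_pseudoFrob, pseudoFrob_eq_insert_of_isAlmostSymmetric hpos hG hG0 hD,
    ncard_insert_of_notMem hGK hfin]

end AlmostSymmetric

section DuplicationOfReflCompl

variable {S T : Set ℤ} {f F b : ℤ}

lemma isGreatest_compl_dup_reflCompl (hS : IsNumericalSemigroup S) (hT : IsPFExtension S T)
    (hf : IsGreatest Sᶜ f) (hfF : 2 * f < F) (hb : b ∈ S) (hbodd : Odd b) :
    IsGreatest (dup S (reflCompl T F) b)ᶜ (2 * F + b) := by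
  refine isGreatest_compl_dup hbodd hf (hT.isGreatest_compl_reflCompl hS) ?_
  linarith [hS.neg_one_le hf, hS.nonneg hb]

lemma two_mul_mem_stdCanonical_dup_reflCompl (hbodd : Odd b)
    (hD : IsGreatest (dup S (reflCompl T F) b)ᶜ (2 * F + b)) {w : ℤ} :
    2 * w ∈ stdCanonical (dup S (reflCompl T F) b) ↔ w ∈ T := by
  rw [two_mul_mem_stdCanonical_dup hbodd hD, mem_reflCompl, sub_sub_cancel, not_not]

lemma isAlmostSymmetric_dup_reflCompl (hS : IsNumericalSemigroup S) (hT : IsPFExtension S T)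
    (hf : IsGreatest Sᶜ f) (hfF : 2 * f < F) (hb : b ∈ S) (hbodd : Odd b) :
    IsAlmostSymmetric (dup S (reflCompl T F) b) := by
  have hD := isGreatest_compl_dup_reflCompl hS hT hf hfF hb hbodd
  intro κ hκ μ hμ
  obtain ⟨w, rfl | rfl⟩ := hbodd.exists_eq_two_mul_or_eq_two_mul_add κ <;>
    obtain ⟨m, rfl | rfl⟩ := hbodd.exists_eq_two_mul_or_eq_two_mul_add μ
  · rw [two_mul_mem_stdCanonical_dup_reflCompl hbodd hD] at hκ
    rw [two_mul_mem_maxIdeal_dup hbodd] at hμ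
    rw [← mul_add, two_mul_mem_maxIdeal_dup hbodd]
    exact hT.subset_setSub hκ m hμ
  · rw [two_mul_mem_stdCanonical_dup_reflCompl hbodd hD] at hκ
    rw [two_mul_add_mem_maxIdeal_dup hbodd] at hμ
    rw [← add_assoc, ← mul_add, two_mul_add_mem_maxIdeal_dup hbodd]
    exact add_mem_reflCompl hT.add_mem hκ hμ
  · rw [two_mul_add_mem_stdCanonical_dup hbodd hD] at hκ
    rw [two_mul_mem_maxIdeal_dup hbodd] at hμ
    rw [show 2 * w + b + 2 * m = 2 * (w + m) + b by ring, two_mul_add_mem_maxIdeal_dup hbodd]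
    intro h
    have := (hT.subset_setSub h m hμ).1
    exact hκ (by rwa [sub_add_eq_sub_sub, sub_add_cancel] at this)
  · rw [two_mul_add_mem_stdCanonical_dup hbodd hD] at hκ
    rw [two_mul_add_mem_maxIdeal_dup hbodd] at hμ
    have hw : w ∈ S := mem_of_isGreatest_compl_of_lt hf (by have := hf.2 hκ; omega)
    have hm : m ∈ S := (hT.isIdealOf_reflCompl hS hf hfF).2.1 hμ
    rw [show 2 * w + b + (2 * m + b) = 2 * (w + m + b) by ring, two_mul_mem_maxIdeal_dup hbodd]
    refine ⟨hS.add_mem (hS.add_mem hw hm) hb, ?_⟩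
    have := hS.nonneg hw
    have := hS.nonneg hm
    have := hS.nonneg hb
    obtain ⟨j, rfl⟩ := hbodd
    simp only [mem_singleton_iff]
    omega

lemma stdCanonical_dup_reflCompl_diff (hS : IsNumericalSemigroup S) (hT : IsPFExtension S T)
    (hf : IsGreatest Sᶜ f) (hfF : 2 * f < F) (hb : b ∈ S) (hbodd : Odd b) :
    stdCanonical (dup S (reflCompl T F) b) \ dup S (reflCompl T F) b =
      (2 * ·) '' (T \ S) ∪ (fun z => 2 * (F - z) + b) '' (T \ S) := by
  have hD := isGreatest_compl_dup_reflCompl hS hT hf hfF hb hbodd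
  obtain ⟨j, hj⟩ := id hbodd
  ext y
  obtain ⟨w, rfl | rfl⟩ := hbodd.exists_eq_two_mul_or_eq_two_mul_add y
  · rw [mem_sdiff, two_mul_mem_stdCanonical_dup_reflCompl hbodd hD, two_mul_mem_dup hbodd]
    constructor
    · exact fun h => Or.inl ⟨w, h, rfl⟩
    · rintro (⟨z, hz, h⟩ | ⟨z, -, h⟩)
      · rwa [show w = z by simp only at h; omega]
      · simp only at h; omega
  · rw [mem_sdiff, two_mul_add_mem_stdCanonical_dup hbodd hD, two_mul_add_mem_dup hbodd,
      mem_reflCompl, not_not]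
    constructor
    · exact fun h => Or.inr ⟨F - w, ⟨h.2, h.1⟩, by ring⟩
    · rintro (⟨z, -, h⟩ | ⟨z, hz, h⟩)
      · simp only at h; omega
      · rw [show F - w = z by simp only at h; omega]
        exact ⟨hz.2, hz.1⟩

lemma typeNS_dup_reflCompl (hS : IsNumericalSemigroup S) (hT : IsPFExtension S T)
    (hf : IsGreatest Sᶜ f) (hfF : 2 * f < F) (hF : 0 ≤ F) (hb : b ∈ S) (hbodd : Odd b) :
    typeNS (dup S (reflCompl T F) b) = 2 * (T \ S).ncard + 1 := by
  have hfin : (T \ S).Finite := hS.finite_pseudoFrob.subset hT.diff_subset_pseudoFrob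
  have hdisj : Disjoint ((2 * ·) '' (T \ S)) ((fun z => 2 * (F - z) + b) '' (T \ S)) := by
    obtain ⟨j, rfl⟩ := hbodd
    exact disjoint_left.2 fun _ ⟨u, _, hu⟩ ⟨v, _, hv⟩ => by simp only at hu hv; omega
  have hpos : ∀ z ∈ dup S (reflCompl T F) b, 0 ≤ z := fun _ =>
    nonneg_of_mem_dup (fun _ => hS.nonneg) (hT.isIdealOf_reflCompl hS hf hfF).2.1 (hS.nonneg hb)
  rw [typeNS_eq_ncard_add_one_of_isAlmostSymmetric ((two_mul_mem_dup hbodd).2 hS.zero_mem) hpos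
      (isGreatest_compl_dup_reflCompl hS hT hf hfF hb hbodd) (by linarith [hS.nonneg hb])
      (isAlmostSymmetric_dup_reflCompl hS hT hf hfF hb hbodd),
    stdCanonical_dup_reflCompl_diff hS hT hf hfF hb hbodd,
    ncard_union_eq hdisj (hfin.image _) (hfin.image _),
    ncard_image_of_injective _ fun _ _ h => by omega,
    ncard_image_of_injective _ fun _ _ h => by omega]
  ring

end DuplicationOfReflCompl

theorem infinitely_many_almost_symmetric_duplications_general
    (S : Set ℤ) (hS : IsNumericalSemigroup S)
    (x : ℕ) (hx : Odd x) (hx2 : x ≤ 2 * typeNS S + 1)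
    (b : ℤ) (hb : b ∈ S) (hbodd : Odd b) :
    {E : Set ℤ | IsIdealOf S E ∧ IsAlmostSymmetric (dup S E b) ∧
      typeNS (dup S E b) = x}.Infinite := by
  obtain ⟨f, hf⟩ := hS.exists_isGreatest_compl
  obtain ⟨k, rfl⟩ := hx
  obtain ⟨Z, hZ, hZk, hup⟩ := hS.finite_pseudoFrob.exists_subset_ncard_eq_upClosed (k := k)
    (by rw [← typeNS_eq_ncard_pseudoFrob]; omega)
  have hT := isPFExtension_union hS hZ hup
  have hTS : (S ∪ Z) \ S = Z := union_sdiff_cancel_left fun z hz => (hZ hz.2).2 hz.1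
  refine ((Ici_infinite (max (2 * f + 1) 0)).image (f := reflCompl (S ∪ Z))
    fun F _ F' _ h => ?_).mono ?_
  · exact (hT.isGreatest_compl_reflCompl hS).unique (h ▸ hT.isGreatest_compl_reflCompl hS)
  · rintro _ ⟨F, hF, rfl⟩
    rw [mem_Ici, max_le_iff] at hF
    refine ⟨hT.isIdealOf_reflCompl hS hf (by omega),
      isAlmostSymmetric_dup_reflCompl hS hT hf (by omega) hb hbodd, ?_⟩
    rw [typeNS_dup_reflCompl hS hT hf (by omega) hF.2 hb hbodd, hTS, hZk]

/-- For every odd `x` with `1 ≤ x ≤ 2t(S) + 1` and every odd `b ∈ S` there are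
infinitely many ideals `E ⊆ S` such that the duplication is almost symmetric
of type `x`. -/
theorem infinitely_many_almost_symmetric_duplications
    (S : Set ℤ) (hS : IsNumericalSemigroup S)
    (x : ℕ) (hx : Odd x) (hx1 : 1 ≤ x) (hx2 : x ≤ 2 * typeNS S + 1)
    (b : ℤ) (hb : b ∈ S) (hbodd : Odd b) :
    {E : Set ℤ | IsIdealOf S E ∧ IsAlmostSymmetric (dup S E b) ∧
      typeNS (dup S E b) = x}.Infinite :=
  infinitely_many_almost_symmetric_duplications_general S hS x hx hx2 b hb hbodd
end
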